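/- arXiv:1910.13668 — 3 statements merged into one kernel-verified Lean document; each statement's English description precedes it below -/
import Mathlib

section
/- Fix λ > 0 and n ≥ 2. Let C = (C_1, …, C_n) be a random vector with values in (0, ∞)^n, and let X_1, X_2, … be i.i.d. copies of C. For K ≥ 1 define the random concave function Ψ_K(p) = m_λ(⟨p, X_1⟩, …, ⟨p, X_K⟩) for p ∈ Δ̄_n. Then almost surely Ψ_K converges, uniformly on every compact subset of Δ_n, to the deterministic function Ψ_∞(p) = −(1/λ) log 𝔼[e^{−λ ⟨p, C⟩}], which is a continuous concave function on Δ̄_n that is nonnegative and strictly positive on Δ_n. -/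
/-!
Write `L(p) = 𝔼[e^{-λ⟨p,C⟩}]` and `L_K(p) = (1/K) ∑_{k<K} e^{-λ⟨p,X_k⟩}`, so that
`Ψ_∞ = -(1/λ) log L` and `Ψ_K = -(1/λ) log L_K`. On the closed orthant `0 < L ≤ 1`, `L` is
continuous by dominated convergence and `log L` is convex by Hölder's inequality; `L(p) < 1` as
soon as `⟨p, C⟩ > 0`. The strong law of large numbers gives `L_K(p) → L(p)` almost surely,
simultaneously for all `p` in a countable dense set. Since `t e^{-t} ≤ 1`, every map
`p ↦ e^{-λ⟨p,x⟩}` with `x ≥ 0` is `δ⁻¹`-Lipschitz on `{p ≥ δ}`, so the `L_K` are equicontinuous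
on the open orthant: convergence extends from the dense set to every point and is uniform on
compact sets (Ascoli), and it survives `-(1/λ) log` because `L` is bounded away from `0` there.
-/

open MeasureTheory

/-- The open unit simplex `Δ_n = {p ∈ (0,1)^n : p_1 + ⋯ + p_n = 1}`. -/
def openSimplex (n : ℕ) : Set (Fin n → ℝ) :=
  {p | (∀ i, 0 < p i ∧ p i < 1) ∧ ∑ i, p i = 1}

/-- The closed unit simplex `Δ̄_n`, the closure of `Δ_n` in `ℝ^n`. -/
def closedSimplex (n : ℕ) : Set (Fin n → ℝ) :=
  {p | (∀ i, 0 ≤ p i) ∧ ∑ i, p i = 1}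

/-- The softmin with parameter `lam`. -/
noncomputable def softmin (lam : ℝ) {K : ℕ} (x : Fin K → ℝ) : ℝ :=
  -(1 / lam) * Real.log ((1 / K) * ∑ k, Real.exp (-lam * x k))

/-- The deterministic limit `Ψ_∞(p) = −(1/λ) log 𝔼[e^{−λ⟨p,C⟩}]`. -/
noncomputable def PsiInf (lam : ℝ) (n : ℕ) {Ω : Type*} [MeasurableSpace Ω]
    (P : Measure Ω) (C : Ω → Fin n → ℝ) (p : Fin n → ℝ) : ℝ :=
  -(1 / lam) * Real.log (∫ ω, Real.exp (-lam * ∑ i, p i * C ω i) ∂P)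

open Filter Topology Set Real ProbabilityTheory

theorem abs_exp_neg_sub_exp_neg_le {a b c : ℝ} (ha : c ≤ a) (hb : c ≤ b) :
    |exp (-a) - exp (-b)| ≤ exp (-c) * |a - b| := by
  wlog hba : b ≤ a generalizing a b
  · rw [abs_sub_comm, abs_sub_comm a]
    exact this hb ha (le_of_not_ge hba)
  have tangent : exp (-b) * (1 - (a - b)) ≤ exp (-a) := by
    rw [show -a = -b + -(a - b) by ring, exp_add]
    gcongr
    linarith [add_one_le_exp (-(a - b))]
  have hexp : exp (-a) ≤ exp (-b) := exp_le_exp.2 (by linarith)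
  rw [abs_of_nonpos (by linarith), abs_of_nonneg (by linarith)]
  calc -(exp (-a) - exp (-b)) ≤ exp (-b) * (a - b) := by linarith
    _ ≤ exp (-c) * (a - b) := by gcongr

section DotProduct

variable {ι : Type*} [Fintype ι] {lam : ℝ} {p : ι → ℝ}

theorem exp_neg_mul_dotProduct_le_one {x : ι → ℝ} (hlam : 0 ≤ lam) (hp : 0 ≤ p) (hx : 0 ≤ x) :
    exp (-lam * (p ⬝ᵥ x)) ≤ 1 := by
  rw [exp_le_one_iff, neg_mul, neg_nonpos]
  exact mul_nonneg hlam (dotProduct_nonneg_of_nonneg hp hx)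

theorem exp_neg_mul_dotProduct_lt_one {x : ι → ℝ} (hlam : 0 < lam) (hp : 0 ≤ p) (hp0 : p ≠ 0)
    (hx : ∀ i, 0 < x i) : exp (-lam * (p ⬝ᵥ x)) < 1 := by
  obtain ⟨i, hi⟩ := Function.ne_iff.1 hp0
  have hpx : 0 < p ⬝ᵥ x := Finset.sum_pos' (fun j _ => mul_nonneg (hp j) (hx j).le)
    ⟨i, Finset.mem_univ i, mul_pos ((hp i).lt_of_ne' hi) (hx i)⟩
  rw [exp_lt_one_iff, neg_mul, neg_neg_iff_pos]
  exact mul_pos hlam hpx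

theorem abs_dotProduct_sub_dotProduct_le (p q x : ι → ℝ) (hx : 0 ≤ x) :
    |p ⬝ᵥ x - q ⬝ᵥ x| ≤ dist p q * ∑ i, x i := by
  rw [← sub_dotProduct, Finset.mul_sum]
  refine (Finset.abs_sum_le_sum_abs _ _).trans (Finset.sum_le_sum fun i _ => ?_)
  rw [Pi.sub_apply, abs_mul, abs_of_nonneg (hx i), ← Real.dist_eq]
  exact mul_le_mul_of_nonneg_right (dist_le_pi_dist p q i) (hx i)

theorem lipschitzOnWith_exp_neg_mul_dotProduct {δ : ℝ} {x : ι → ℝ} (hlam : 0 ≤ lam)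
    (hδ : 0 < δ) (hx : 0 ≤ x) :
    LipschitzOnWith (Real.toNNReal δ⁻¹) (fun p => exp (-lam * (p ⬝ᵥ x))) (Ici fun _ => δ) := by
  refine LipschitzOnWith.of_dist_le_mul fun p hp q hq => ?_
  set s := ∑ i, x i
  have hlow : ∀ r ∈ Ici (fun _ => δ), lam * (δ * s) ≤ lam * (r ⬝ᵥ x) := fun r hr => by
    have := dotProduct_le_dotProduct_of_nonneg_right hr hx
    rw [dotProduct, ← Finset.mul_sum] at this
    exact mul_le_mul_of_nonneg_left this hlam
  have hts : (lam * δ * s) * exp (-(lam * δ * s)) ≤ 1 :=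
    (mul_exp_neg_le_exp_neg_one _).trans (exp_le_one_iff.2 (by norm_num))
  rw [Real.dist_eq, Real.coe_toNNReal _ (inv_nonneg.2 hδ.le), neg_mul, neg_mul]
  calc |exp (-(lam * (p ⬝ᵥ x))) - exp (-(lam * (q ⬝ᵥ x)))|
      ≤ exp (-(lam * (δ * s))) * |lam * (p ⬝ᵥ x) - lam * (q ⬝ᵥ x)| :=
        abs_exp_neg_sub_exp_neg_le (hlow p hp) (hlow q hq)
    _ ≤ exp (-(lam * (δ * s))) * (lam * (dist p q * s)) := by
        rw [← mul_sub, abs_mul, abs_of_nonneg hlam]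
        gcongr
        exact abs_dotProduct_sub_dotProduct_le p q x hx
    _ = (lam * δ * s) * exp (-(lam * δ * s)) * δ⁻¹ * dist p q := by
        field_simp
    _ ≤ 1 * δ⁻¹ * dist p q := by gcongr
    _ = δ⁻¹ * dist p q := by rw [one_mul]

end DotProduct

theorem LipschitzOnWith.mean {α : Type*} [PseudoMetricSpace α] {s : Set α} {L : NNReal} {K : ℕ}
    {f : Fin K → α → ℝ} (hf : ∀ k, LipschitzOnWith L (f k) s) :
    LipschitzOnWith L (fun a => (1 / K) * ∑ k, f k a) s := by
  refine LipschitzOnWith.of_dist_le_mul fun a ha b hb => ?_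
  have hK : (1 / K : ℝ) * K ≤ 1 := by
    rcases K.eq_zero_or_pos with rfl | hK
    · simp
    · rw [one_div_mul_cancel (by positivity)]
  rw [Real.dist_eq, ← mul_sub, ← Finset.sum_sub_distrib, abs_mul, abs_of_nonneg (by positivity)]
  calc (1 / K : ℝ) * |∑ k, (f k a - f k b)| ≤ (1 / K) * ∑ _k : Fin K, L * dist a b := by
        gcongr
        refine (Finset.abs_sum_le_sum_abs _ _).trans (Finset.sum_le_sum fun k _ => ?_)
        rw [← Real.dist_eq]
        exact (hf k).dist_le_mul a ha b hb
    _ = (1 / K) * K * (L * dist a b) := by simp [mul_assoc]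
    _ ≤ L * dist a b := mul_le_of_le_one_left (by positivity) hK

theorem EquicontinuousOn.tendstoUniformlyOn_of_tendsto {ι X α : Type*} [TopologicalSpace X]
    [UniformSpace α] {F : ι → X → α} {f : X → α} {l : Filter ι} {S : Set X} (hS : IsCompact S)
    (hF : EquicontinuousOn F S) (h : ∀ x ∈ S, Tendsto (F · x) l (𝓝 (f x))) :
    TendstoUniformlyOn F f l S := by
  have := (EquicontinuousOn.tendsto_uniformOnFun_iff_pi' (𝔖 := {S}) (by simpa using hS)
    (by simpa using hF) l f).2 (tendsto_pi_nhds.2 fun x => h x (by simpa using x.2))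
  rw [UniformOnFun.tendsto_iff_tendstoUniformlyOn] at this
  exact this S rfl

theorem TendstoUniformlyOn.comp_continuousOn {ι α β γ : Type*} [PseudoMetricSpace β]
    [ProperSpace β] [UniformSpace γ] {F : ι → α → β} {f : α → β} {l : Filter ι} {S : Set α}
    {K U : Set β} {g : β → γ} (h : TendstoUniformlyOn F f l S) (hK : IsCompact K)
    (hU : IsOpen U) (hKU : K ⊆ U) (hg : ContinuousOn g U) (hf : MapsTo f S K) :
    TendstoUniformlyOn (fun i x => g (F i x)) (fun x => g (f x)) l S := by
  obtain ⟨δ, hδ, hδU⟩ := hK.exists_cthickening_subset_open hU hKU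
  have hg' : UniformContinuousOn g (Metric.cthickening δ K) :=
    hK.cthickening.uniformContinuousOn_of_continuous (hg.mono hδU)
  refine hg'.comp_tendstoUniformlyOn_eventually ?_
    (fun x hx => Metric.self_subset_cthickening K (hf hx)) h
  filter_upwards [Metric.tendstoUniformlyOn_iff.1 h δ hδ] with i hi x hx
  exact Metric.mem_cthickening_of_dist_le _ _ δ K (hf hx) (by rw [dist_comm]; exact (hi x hx).le)

section Holder

variable {α : Type*} [MeasurableSpace α] {μ : Measure α}

theorem memLp_exp_mul {f : α → ℝ} {c : ℝ} (hc : 0 < c) (hf : Integrable (fun x => exp (f x)) μ) :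
    MemLp (fun x => exp (c * f x)) (ENNReal.ofReal (1 / c)) μ := by
  have h0 : ENNReal.ofReal (1 / c) ≠ 0 := by simpa using hc
  have hpow : ∀ x, exp (c * f x) ^ (1 / c) = exp (f x) := fun x => by
    rw [← exp_mul]; field_simp
  have hmeas : AEStronglyMeasurable (fun x => exp (c * f x)) μ := by
    have : AEMeasurable (fun x => exp (f x) ^ c) μ := hf.aemeasurable.pow_const c
    refine this.aestronglyMeasurable.congr (ae_of_all _ fun x => ?_)
    simp only [← exp_mul, mul_comm]
  rw [← memLp_norm_rpow_iff hmeas h0 ENNReal.ofReal_ne_top, ENNReal.toReal_ofReal (by positivity),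
    ENNReal.div_self h0 ENNReal.ofReal_ne_top, memLp_one_iff_integrable]
  refine hf.congr (ae_of_all _ fun x => ?_)
  simp only [norm_of_nonneg (exp_pos _).le, hpow]

/-- Hölder's inequality with exponents `1/a` and `1/b`. -/
theorem integral_exp_mul_add_mul_le {f g : α → ℝ} {a b : ℝ} (ha : 0 < a) (hb : 0 < b)
    (hab : a + b = 1) (hf : Integrable (fun x => exp (f x)) μ)
    (hg : Integrable (fun x => exp (g x)) μ) :
    ∫ x, exp (a * f x + b * g x) ∂μ ≤ (∫ x, exp (f x) ∂μ) ^ a * (∫ x, exp (g x) ∂μ) ^ b := by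
  have := integral_mul_le_Lp_mul_Lq_of_nonneg (holderConjugate_one_div ha hb hab)
    (ae_of_all _ fun x => (exp_pos (a * f x)).le) (ae_of_all _ fun x => (exp_pos (b * g x)).le)
    (memLp_exp_mul ha hf) (memLp_exp_mul hb hg)
  simpa only [← exp_add, ← exp_mul, one_div_one_div, mul_one_div, mul_div_cancel_left₀ _ ha.ne',
    mul_div_cancel_left₀ _ hb.ne'] using this

end Holder

section Laplace

variable {Ω ι : Type*} [MeasurableSpace Ω] [Fintype ι] {P : Measure Ω} {C : Ω → ι → ℝ}
  {lam : ℝ} {p : ι → ℝ}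

/-- `𝔼[e^{-λ⟨p, C⟩}]`, so that `PsiInf lam n P C = -(1/λ) log ∘ laplace lam P C`. -/
noncomputable def laplace (lam : ℝ) (P : Measure Ω) (C : Ω → ι → ℝ) (p : ι → ℝ) : ℝ :=
  ∫ ω, exp (-lam * (p ⬝ᵥ C ω)) ∂P

section Finite

variable [IsFiniteMeasure P]

theorem integrable_exp_neg_mul_dotProduct (hlam : 0 ≤ lam) (hp : 0 ≤ p) (hC : AEMeasurable C P)
    (hCnn : ∀ᵐ ω ∂P, 0 ≤ C ω) : Integrable (fun ω => exp (-lam * (p ⬝ᵥ C ω))) P := by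
  refine .of_bound (by fun_prop) 1 (hCnn.mono fun ω hω => ?_)
  rw [norm_of_nonneg (exp_pos _).le]
  exact exp_neg_mul_dotProduct_le_one hlam hp hω

theorem continuousOn_laplace (hlam : 0 ≤ lam) (hC : AEMeasurable C P) (hCnn : ∀ᵐ ω ∂P, 0 ≤ C ω) :
    ContinuousOn (laplace lam P C) (Ici 0) := by
  refine continuousOn_of_dominated (bound := fun _ => 1)
    (fun p hp => (integrable_exp_neg_mul_dotProduct hlam hp hC hCnn).aestronglyMeasurable)
    (fun p hp => hCnn.mono fun ω hω => ?_) (integrable_const 1)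
    (ae_of_all _ fun ω => Continuous.continuousOn (by fun_prop))
  rw [norm_of_nonneg (exp_pos _).le]
  exact exp_neg_mul_dotProduct_le_one hlam hp hω

theorem laplace_pos [NeZero P] (hlam : 0 ≤ lam) (hp : 0 ≤ p) (hC : AEMeasurable C P)
    (hCnn : ∀ᵐ ω ∂P, 0 ≤ C ω) : 0 < laplace lam P C p :=
  integral_exp_pos (integrable_exp_neg_mul_dotProduct hlam hp hC hCnn)

theorem convexOn_log_laplace [NeZero P] (hlam : 0 ≤ lam) (hC : AEMeasurable C P)
    (hCnn : ∀ᵐ ω ∂P, 0 ≤ C ω) : ConvexOn ℝ (Ici 0) fun p => log (laplace lam P C p) := by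
  refine convexOn_iff_forall_pos.2 ⟨convex_Ici 0, fun p hp q hq a b ha hb hab => ?_⟩
  have hpq : laplace lam P C (a • p + b • q) ≤ laplace lam P C p ^ a * laplace lam P C q ^ b := by
    refine Eq.trans_le (integral_congr_ae (ae_of_all _ fun ω => ?_))
      (integral_exp_mul_add_mul_le ha hb hab (integrable_exp_neg_mul_dotProduct hlam hp hC hCnn)
        (integrable_exp_neg_mul_dotProduct hlam hq hC hCnn))
    simp only [add_dotProduct, smul_dotProduct, smul_eq_mul]
    ring_nf
  have hLp := laplace_pos hlam hp hC hCnn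
  have hLq := laplace_pos hlam hq hC hCnn
  calc log (laplace lam P C (a • p + b • q))
      ≤ log (laplace lam P C p ^ a * laplace lam P C q ^ b) :=
        log_le_log (laplace_pos hlam (convex_Ici 0 hp hq ha.le hb.le hab) hC hCnn) hpq
    _ = a • log (laplace lam P C p) + b • log (laplace lam P C q) := by
        rw [log_mul (by positivity) (by positivity), log_rpow hLp, log_rpow hLq, smul_eq_mul,
          smul_eq_mul]

end Finite

theorem laplace_le_one [IsProbabilityMeasure P] (hlam : 0 ≤ lam) (hp : 0 ≤ p)
    (hC : AEMeasurable C P) (hCnn : ∀ᵐ ω ∂P, 0 ≤ C ω) : laplace lam P C p ≤ 1 := by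
  have := integral_mono_ae (integrable_exp_neg_mul_dotProduct hlam hp hC hCnn)
    (integrable_const 1) (hCnn.mono fun ω hω => exp_neg_mul_dotProduct_le_one hlam hp hω)
  simpa [laplace] using this

theorem laplace_lt_one [IsProbabilityMeasure P] (hlam : 0 < lam) (hp : 0 ≤ p) (hp0 : p ≠ 0)
    (hC : AEMeasurable C P) (hCpos : ∀ ω i, 0 < C ω i) : laplace lam P C p < 1 := by
  have hlt : ∀ ω, exp (-lam * (p ⬝ᵥ C ω)) < 1 := fun ω =>
    exp_neg_mul_dotProduct_lt_one hlam hp hp0 (hCpos ω)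
  have hint := integrable_exp_neg_mul_dotProduct hlam.le hp hC
    (ae_of_all _ fun ω i => (hCpos ω i).le)
  have hsupp : Function.support (fun ω => 1 - exp (-lam * (p ⬝ᵥ C ω))) = univ :=
    eq_univ_of_forall fun ω => sub_ne_zero.2 (hlt ω).ne'
  have hgap : 0 < ∫ ω, (1 - exp (-lam * (p ⬝ᵥ C ω))) ∂P := by
    rw [integral_pos_iff_support_of_nonneg (fun ω => sub_nonneg.2 (hlt ω).le)
      ((integrable_const 1).sub hint), hsupp]
    simp
  rw [integral_sub (integrable_const 1) hint] at hgap
  simpa [laplace] using hgap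

end Laplace

section Empirical

variable {ι : Type*} [Fintype ι] {lam : ℝ}

/-- The mean of `e^{-λ⟨p, x k⟩}` over `k < K`, so that
`softmin lam (fun k : Fin K => ⟨p, x k⟩) = -(1/λ) log (empiricalLaplace lam x K p)`. -/
noncomputable def empiricalLaplace (lam : ℝ) (x : ℕ → ι → ℝ) (K : ℕ) (p : ι → ℝ) : ℝ :=
  (1 / K) * ∑ k : Fin K, exp (-lam * (p ⬝ᵥ x k))

theorem equicontinuousAt_empiricalLaplace {x : ℕ → ι → ℝ} {p : ι → ℝ} (hlam : 0 ≤ lam)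
    (hx : ∀ k, 0 ≤ x k) (hp : ∀ i, 0 < p i) : EquicontinuousAt (empiricalLaplace lam x) p := by
  obtain ⟨δ, hδ, hδp⟩ : ∃ δ : ℝ, 0 < δ ∧ ∀ i, δ < p i :=
    ((eventually_mem_nhdsWithin (a := (0 : ℝ)) (s := Ioi 0)).and
      (eventually_all.2 fun i => nhdsWithin_le_nhds (Iio_mem_nhds (hp i)))).exists
  have hnhds : Ici (fun _ => δ) ∈ 𝓝 p := by
    rw [← pi_univ_Ici]
    exact set_pi_mem_nhds finite_univ fun i _ => Ici_mem_nhds (hδp i)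
  have hlip (K : ℕ) : LipschitzOnWith (Real.toNNReal δ⁻¹) (empiricalLaplace lam x K)
      (Ici fun _ => δ) :=
    LipschitzOnWith.mean fun k => lipschitzOnWith_exp_neg_mul_dotProduct hlam hδ (hx k)
  have hwithin := (LipschitzOnWith.uniformEquicontinuousOn _ _ hlip).equicontinuousOn p
    (mem_of_mem_nhds hnhds)
  intro U hU
  simpa only [nhdsWithin_eq_nhds.2 hnhds] using hwithin U hU

theorem tendstoUniformlyOn_empiricalLaplace_of_dense {x : ℕ → ι → ℝ} {g : (ι → ℝ) → ℝ}
    {D S : Set (ι → ℝ)} (hlam : 0 ≤ lam) (hx : ∀ k, 0 ≤ x k) (hD : Dense D)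
    (hg : ContinuousOn g (univ.pi fun _ => Ioi 0))
    (hconv : ∀ d ∈ (univ.pi fun _ => Ioi 0) ∩ D,
      Tendsto (fun K => empiricalLaplace lam x K d) atTop (𝓝 (g d)))
    (hS : IsCompact S) (hSU : S ⊆ univ.pi fun _ => Ioi 0) :
    TendstoUniformlyOn (empiricalLaplace lam x) g atTop S := by
  have hU : IsOpen (univ.pi fun _ : ι => Ioi (0 : ℝ)) :=
    isOpen_set_pi finite_univ fun _ _ => isOpen_Ioi
  have hequi : ∀ p ∈ S, EquicontinuousAt (empiricalLaplace lam x) p := fun p hp =>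
    equicontinuousAt_empiricalLaplace hlam hx (mem_univ_pi.1 (hSU hp))
  refine EquicontinuousOn.tendstoUniformlyOn_of_tendsto hS
    (fun p hp => (hequi p hp).equicontinuousWithinAt S) fun p hp => ?_
  exact (hequi p hp).tendsto_of_mem_closure ((hg p (hSU hp)).mono inter_subset_left) hconv
    (hD.open_subset_closure_inter hU (hSU hp))

end Empirical

section StrongLaw

variable {Ω ι : Type*} [MeasurableSpace Ω] [Fintype ι] {P : Measure Ω} [IsFiniteMeasure P]
  {C : Ω → ι → ℝ} {X : ℕ → Ω → ι → ℝ} {lam : ℝ}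

theorem ae_tendsto_empiricalLaplace {p : ι → ℝ} (hlam : 0 ≤ lam) (hp : 0 ≤ p)
    (hCnn : ∀ᵐ ω ∂P, 0 ≤ C ω) (hindep : Pairwise fun k j => IndepFun (X k) (X j) P)
    (hident : ∀ k, IdentDistrib (X k) C P P) :
    ∀ᵐ ω ∂P, Tendsto (fun K => empiricalLaplace lam (X · ω) K p) atTop
      (𝓝 (laplace lam P C p)) := by
  set φ : (ι → ℝ) → ℝ := fun x => exp (-lam * (p ⬝ᵥ x))
  have hφ : Measurable φ := by fun_prop
  have hint : Integrable (φ ∘ C) P :=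
    integrable_exp_neg_mul_dotProduct hlam hp (hident 0).aemeasurable_snd hCnn
  have hslln := strong_law_ae_real (fun k => φ ∘ X k)
    (((hident 0).comp hφ).integrable_iff.2 hint) (fun k j hkj => (hindep hkj).comp hφ hφ)
    (fun k => ((hident k).trans (hident 0).symm).comp hφ)
  rw [((hident 0).comp hφ).integral_eq] at hslln
  filter_upwards [hslln] with ω hω
  refine hω.congr fun K => ?_
  rw [empiricalLaplace, Fin.sum_univ_eq_sum_range (fun k => φ (X k ω)), one_div_mul_eq_div]
  rfl

theorem ae_tendstoUniformlyOn_empiricalLaplace (hlam : 0 ≤ lam) (hCnn : ∀ᵐ ω ∂P, 0 ≤ C ω)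
    (hindep : Pairwise fun k j => IndepFun (X k) (X j) P)
    (hident : ∀ k, IdentDistrib (X k) C P P) :
    ∀ᵐ ω ∂P, ∀ S, IsCompact S → S ⊆ univ.pi (fun _ => Ioi 0) →
      TendstoUniformlyOn (empiricalLaplace lam (X · ω)) (laplace lam P C) atTop S := by
  obtain ⟨D, hDc, hD⟩ := TopologicalSpace.exists_countable_dense (ι → ℝ)
  have hXnn : ∀ᵐ ω ∂P, ∀ k, 0 ≤ X k ω :=
    ae_all_iff.2 fun k => (hident k).symm.ae_snd measurableSet_Ici hCnn
  have hconv : ∀ᵐ ω ∂P, ∀ d ∈ Ici 0 ∩ D, Tendsto (fun K => empiricalLaplace lam (X · ω) K d)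
      atTop (𝓝 (laplace lam P C d)) :=
    (ae_ball_iff (hDc.mono inter_subset_right)).2 fun d hd =>
      ae_tendsto_empiricalLaplace hlam hd.1 hCnn hindep hident
  filter_upwards [hXnn, hconv] with ω hωX hω S hS hSU
  have hUIci : univ.pi (fun _ : ι => Ioi (0 : ℝ)) ⊆ Ici 0 := fun p hp i => (hp i trivial).le
  exact tendstoUniformlyOn_empiricalLaplace_of_dense hlam hωX hD
    ((continuousOn_laplace hlam (hident 0).aemeasurable_snd hCnn).mono hUIci)
    (fun d hd => hω d ⟨hUIci hd.1, hd.2⟩) hS hSU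

end StrongLaw

theorem softmin_hyperplanes_det_limit_general (lam : ℝ) (hlam : 0 < lam) (n : ℕ)
    {Ω : Type*} [MeasurableSpace Ω] (P : Measure Ω) [IsProbabilityMeasure P]
    (C : Ω → Fin n → ℝ) (hCmeas : Measurable C) (hCpos : ∀ ω i, 0 < C ω i)
    (X : ℕ → Ω → Fin n → ℝ) (hXmeas : ∀ k, Measurable (X k))
    (hindep : ProbabilityTheory.iIndepFun X P)
    (hlaw : ∀ k, Measure.map (X k) P = Measure.map C P) :
    (ContinuousOn (PsiInf lam n P C) (closedSimplex n) ∧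
      ConcaveOn ℝ (closedSimplex n) (PsiInf lam n P C) ∧
      (∀ p ∈ closedSimplex n, 0 ≤ PsiInf lam n P C p) ∧
      (∀ p ∈ openSimplex n, 0 < PsiInf lam n P C p)) ∧
    ∀ᵐ ω ∂P, ∀ S : Set (Fin n → ℝ), IsCompact S → S ⊆ openSimplex n →
      TendstoUniformlyOn
        (fun (K : ℕ) (p : Fin n → ℝ) =>
          softmin lam (fun k : Fin K => ∑ i, p i * X k ω i))
        (PsiInf lam n P C) Filter.atTop S := by
  have hC : AEMeasurable C P := hCmeas.aemeasurable
  have hCnn : ∀ᵐ ω ∂P, 0 ≤ C ω := ae_of_all _ fun ω i => (hCpos ω i).le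
  have hsimplex : closedSimplex n ⊆ Ici 0 := fun p hp => hp.1
  have hopen : openSimplex n ⊆ closedSimplex n := fun p hp => ⟨fun i => (hp.1 i).1.le, hp.2⟩
  have hcont := continuousOn_laplace hlam.le hC hCnn
  have hpos : ∀ p ∈ closedSimplex n, 0 < laplace lam P C p := fun p hp =>
    laplace_pos hlam.le hp.1 hC hCnn
  have hlog : ContinuousOn (fun y => -(1 / lam) * log y) (Ioi 0) :=
    continuousOn_const.mul (continuousOn_log.mono fun y hy => ne_of_gt hy)
  refine ⟨⟨hlog.comp (hcont.mono hsimplex) hpos, ?_, fun p hp => ?_, fun p hp => ?_⟩, ?_⟩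
  · have := (((convexOn_log_laplace hlam.le hC hCnn).subset hsimplex
      (convex_stdSimplex ℝ (Fin n))).smul (c := 1 / lam) (by positivity)).neg
    refine this.congr fun p _ => ?_
    simp only [Pi.neg_apply, smul_eq_mul, ← neg_mul]
    rfl
  · exact mul_nonneg_of_nonpos_of_nonpos (by simp [hlam.le])
      (log_nonpos (hpos p hp).le (laplace_le_one hlam.le hp.1 hC hCnn))
  · have hp0 : p ≠ 0 := fun h => by simp [h, openSimplex] at hp
    exact mul_pos_of_neg_of_neg (by simp [hlam])
      (log_neg (hpos p (hopen hp)) (laplace_lt_one hlam (hopen hp).1 hp0 hC hCpos))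
  have hident : ∀ k, IdentDistrib (X k) C P P := fun k => ⟨(hXmeas k).aemeasurable, hC, hlaw k⟩
  filter_upwards [ae_tendstoUniformlyOn_empiricalLaplace hlam.le hCnn
    (fun k j hkj => hindep.indepFun hkj) hident] with ω hω S hS hSsub
  have hSpos : MapsTo (laplace lam P C) S (Ioi 0) := fun p hp => hpos p (hopen (hSsub hp))
  exact (hω S hS fun p hp i _ => ((hSsub hp).1 i).1).comp_continuousOn
    (hS.image_of_continuousOn (hcont.mono fun p hp => (hopen (hSsub hp)).1)) isOpen_Ioi
    hSpos.image_subset hlog (mapsTo_image _ S)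

/-- with `λ > 0` fixed and `X_1, X_2, …` i.i.d. copies of a random vector
`C` with values in `(0,∞)^n`, the random concave functions
`Ψ_K(p) = m_λ(⟨p,X_1⟩, …, ⟨p,X_K⟩)` converge almost surely, uniformly on every compact
subset of `Δ_n`, to the deterministic function `Ψ_∞(p) = −(1/λ) log 𝔼[e^{−λ⟨p,C⟩}]`,
which is continuous and concave on `Δ̄_n`, nonnegative there, and strictly positive
on `Δ_n`. -/
theorem softmin_hyperplanes_det_limit (lam : ℝ) (hlam : 0 < lam) (n : ℕ) (hn : 2 ≤ n)
    {Ω : Type*} [MeasurableSpace Ω] (P : Measure Ω) [IsProbabilityMeasure P]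
    (C : Ω → Fin n → ℝ) (hCmeas : Measurable C) (hCpos : ∀ ω i, 0 < C ω i)
    (X : ℕ → Ω → Fin n → ℝ) (hXmeas : ∀ k, Measurable (X k))
    (hindep : ProbabilityTheory.iIndepFun X P)
    (hlaw : ∀ k, Measure.map (X k) P = Measure.map C P) :
    (ContinuousOn (PsiInf lam n P C) (closedSimplex n) ∧
      ConcaveOn ℝ (closedSimplex n) (PsiInf lam n P C) ∧
      (∀ p ∈ closedSimplex n, 0 ≤ PsiInf lam n P C p) ∧
      (∀ p ∈ openSimplex n, 0 < PsiInf lam n P C p)) ∧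
    ∀ᵐ ω ∂P, ∀ S : Set (Fin n → ℝ), IsCompact S → S ⊆ openSimplex n →
      TendstoUniformlyOn
        (fun (K : ℕ) (p : Fin n → ℝ) =>
          softmin lam (fun k : Fin K => ∑ i, p i * X k ω i))
        (PsiInf lam n P C) Filter.atTop S :=
  softmin_hyperplanes_det_limit_general lam hlam n P C hCmeas hCpos X hXmeas hindep hlaw
end

section
/- Let n ≥ 2 and let ψ : Δ̄_n → [0, ∞) be a continuous concave function that is strictly positive on Δ_n. Define Ŝ(ψ) = {x ∈ (0,∞)^n : ⟨q, x⟩ ≥ ψ(q) for all q ∈ Δ_n}. Then ψ(p) = inf_{x ∈ Ŝ(ψ)} ⟨p, x⟩ for every p ∈ Δ̄_n. -/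
/-!
Every `x ∈ Ŝ(ψ)` dominates `ψ` on the closed simplex by continuity, since `Δ_n` is dense in `Δ̄_n`
when `n ≥ 2`; hence `ψ(p)` is a lower bound. Conversely, separating the point `(p, ψ(p) + ε)` from
the closed convex hypograph of `ψ` gives an affine majorant of `ψ` that is below `ψ(p) + ε` at `p`.
On the simplex an affine function is `q ↦ ⟨q, x⟩` with `x_i` its value at the vertex `e_i`, and
`x_i > ψ(e_i) ≥ 0`.
-/

open Set

section AffineMajorant

variable {E : Type*} [AddCommGroup E] [Module ℝ E] [TopologicalSpace E] [IsTopologicalAddGroup E]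
  [ContinuousSMul ℝ E] [LocallyConvexSpace ℝ E]

theorem ConcaveOn.exists_affine_gt_of_lt {s : Set E} {ψ : E → ℝ} (hconc : ConcaveOn ℝ s ψ)
    (hs : IsClosed s) (hψ : UpperSemicontinuousOn ψ s) {p : E} (hp : p ∈ s) {ε : ℝ}
    (hε : 0 < ε) :
    ∃ (g : StrongDual ℝ E) (c : ℝ), (∀ q ∈ s, ψ q < g q + c) ∧ g p + c < ψ p + ε := by
  have hnot : (p, ψ p + ε) ∉ {z : E × ℝ | z.1 ∈ s ∧ z.2 ≤ ψ z.1} := fun h => by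
    linarith [h.2]
  obtain ⟨f, u, hf, hu⟩ := geometric_hahn_banach_closed_point hconc.convex_hypograph
    ((upperSemicontinuousOn_iff_isClosed_hypograph hs).1 hψ) hnot
  set σ := f (0, 1)
  have hsplit (q : E) (t : ℝ) : f (q, t) = f (q, 0) + t * σ := by
    rw [← smul_eq_mul, ← map_smul, ← map_add, Prod.smul_mk, smul_zero, smul_eq_mul, mul_one,
      Prod.mk_add_mk, add_zero, zero_add]
  have hbelow (q : E) (hq : q ∈ s) : f (q, 0) + ψ q * σ < u := hsplit q (ψ q) ▸ hf _ ⟨hq, le_rfl⟩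
  have hσ : 0 < σ := by
    have := hbelow p hp
    rw [hsplit] at hu
    nlinarith
  refine ⟨-σ⁻¹ • f.comp (ContinuousLinearMap.inl ℝ E ℝ), u / σ, fun q hq => ?_, ?_⟩
  · change ψ q < -σ⁻¹ * f (q, 0) + u / σ
    have := hbelow q hq
    rw [neg_mul, ← div_eq_inv_mul, neg_add_eq_sub, ← sub_div, lt_div_iff₀ hσ]
    linarith
  · change -σ⁻¹ * f (p, 0) + u / σ < ψ p + ε
    rw [hsplit] at hu
    rw [neg_mul, ← div_eq_inv_mul, neg_add_eq_sub, ← sub_div, div_lt_iff₀ hσ]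
    linarith

end AffineMajorant

theorem openSimplex_subset_closedSimplex (n : ℕ) : openSimplex n ⊆ closedSimplex n :=
  fun _ hq => ⟨fun i => (hq.1 i).1.le, hq.2⟩

theorem mem_openSimplex_of_pos {n : ℕ} (hn : 2 ≤ n) {q : Fin n → ℝ} (hpos : ∀ i, 0 < q i)
    (hsum : ∑ i, q i = 1) : q ∈ openSimplex n := by
  refine ⟨fun i => ⟨hpos i, ?_⟩, hsum⟩
  have : Nontrivial (Fin n) := Fin.nontrivial_iff_two_le.2 hn
  obtain ⟨j, hj⟩ := exists_ne i
  rw [← hsum]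
  exact Finset.single_lt_sum hj (Finset.mem_univ i) (Finset.mem_univ j) (hpos j)
    fun k _ _ => (hpos k).le

theorem closedSimplex_subset_closure_openSimplex {n : ℕ} (hn : 2 ≤ n) :
    closedSimplex n ⊆ closure (openSimplex n) := by
  intro p hp
  have hn0 : (0 : ℝ) < n := by positivity
  let c : Fin n → ℝ := fun _ => (n : ℝ)⁻¹
  have hsegment : openSegment ℝ p c ⊆ openSimplex n := by
    rintro _ ⟨a, b, ha, hb, hab, rfl⟩
    refine mem_openSimplex_of_pos hn (fun i => ?_) ?_
    · have := hp.1 i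
      simp only [Pi.add_apply, Pi.smul_apply, smul_eq_mul, c]
      positivity
    · simp only [Pi.add_apply, Pi.smul_apply, smul_eq_mul, Finset.sum_add_distrib,
        ← Finset.mul_sum, hp.2, c, Finset.sum_const, Finset.card_univ, Fintype.card_fin,
        nsmul_eq_mul, mul_inv_cancel₀ hn0.ne', mul_one, hab]
  exact closure_mono hsegment (segment_subset_closure_openSegment (left_mem_segment ℝ p c))

theorem le_sum_mul_of_forall_openSimplex {n : ℕ} (hn : 2 ≤ n) {ψ : (Fin n → ℝ) → ℝ}
    (hcont : ContinuousOn ψ (closedSimplex n)) {x : Fin n → ℝ}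
    (hx : ∀ q ∈ openSimplex n, ψ q ≤ ∑ i, q i * x i) {p : Fin n → ℝ}
    (hp : p ∈ closedSimplex n) : ψ p ≤ ∑ i, p i * x i :=
  ContinuousWithinAt.closure_le (closedSimplex_subset_closure_openSimplex hn hp)
    ((hcont p hp).mono (openSimplex_subset_closedSimplex n))
    (continuous_finsetSum _ fun i _ => by fun_prop).continuousWithinAt hx

theorem StrongDual.apply_add_eq_sum_mul {n : ℕ} (g : StrongDual ℝ (Fin n → ℝ)) (c : ℝ)
    {q : Fin n → ℝ} (hq : ∑ i, q i = 1) :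
    g q + c = ∑ i, q i * (g (Pi.single i 1) + c) := by
  simp only [mul_add, Finset.sum_add_distrib, ← Finset.sum_mul, hq, one_mul]
  congr 1
  rw [← g.coe_coe, g.toLinearMap.pi_apply_eq_sum_univ]
  refine Finset.sum_congr rfl fun i _ => ?_
  simp_rw [smul_eq_mul, ← Pi.single_apply, Pi.single_comm]

theorem exists_pos_sum_mul_gt_of_lt {n : ℕ} {ψ : (Fin n → ℝ) → ℝ}
    (hcont : ContinuousOn ψ (closedSimplex n)) (hconc : ConcaveOn ℝ (closedSimplex n) ψ)
    (hnonneg : ∀ p ∈ closedSimplex n, 0 ≤ ψ p) {p : Fin n → ℝ} (hp : p ∈ closedSimplex n)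
    {ε : ℝ} (hε : 0 < ε) :
    ∃ x : Fin n → ℝ, (∀ i, 0 < x i) ∧ (∀ q ∈ closedSimplex n, ψ q < ∑ i, q i * x i) ∧
      ∑ i, p i * x i < ψ p + ε := by
  -- `closedSimplex n` is definitionally `stdSimplex ℝ (Fin n)`.
  obtain ⟨g, c, hmaj, hp_lt⟩ := hconc.exists_affine_gt_of_lt (isClosed_stdSimplex ℝ (Fin n))
    hcont.upperSemicontinuousOn hp hε
  have hsum (q : Fin n → ℝ) (hq : q ∈ closedSimplex n) := g.apply_add_eq_sum_mul c hq.2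
  refine ⟨fun i => g (Pi.single i 1) + c, fun i => ?_, fun q hq => hsum q hq ▸ hmaj q hq,
    hsum p hp ▸ hp_lt⟩
  have hvertex := single_mem_stdSimplex ℝ i
  exact (hnonneg _ hvertex).trans_lt (hmaj _ hvertex)

theorem concave_duality_support_function_general (n : ℕ) (hn : 2 ≤ n)
    (ψ : (Fin n → ℝ) → ℝ)
    (hcont : ContinuousOn ψ (closedSimplex n))
    (hconc : ConcaveOn ℝ (closedSimplex n) ψ)
    (hnonneg : ∀ p ∈ closedSimplex n, 0 ≤ ψ p)
    (p : Fin n → ℝ) (hp : p ∈ closedSimplex n) :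
    ψ p = sInf ((fun x => ∑ i, p i * x i) ''
      {x : Fin n → ℝ | (∀ i, 0 < x i) ∧ ∀ q ∈ openSimplex n, ψ q ≤ ∑ i, q i * x i}) := by
  set S := {x : Fin n → ℝ | (∀ i, 0 < x i) ∧ ∀ q ∈ openSimplex n, ψ q ≤ ∑ i, q i * x i}
  have hnear {ε : ℝ} (hε : 0 < ε) : ∃ x ∈ S, ∑ i, p i * x i < ψ p + ε := by
    obtain ⟨x, hpos, hmaj, hlt⟩ := exists_pos_sum_mul_gt_of_lt hcont hconc hnonneg hp hε
    exact ⟨x, ⟨hpos, fun q hq => (hmaj q (openSimplex_subset_closedSimplex n hq)).le⟩, hlt⟩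
  have hlower : ψ p ∈ lowerBounds ((fun x => ∑ i, p i * x i) '' S) := by
    rintro _ ⟨x, hx, rfl⟩
    exact le_sum_mul_of_forall_openSimplex hn hcont hx.2 hp
  obtain ⟨x₁, hx₁, -⟩ := hnear one_pos
  refine le_antisymm (le_csInf ⟨_, x₁, hx₁, rfl⟩ hlower) (le_of_forall_pos_le_add fun ε hε => ?_)
  obtain ⟨x, hx, hlt⟩ := hnear hε
  exact (csInf_le ⟨ψ p, hlower⟩ ⟨x, hx, rfl⟩).trans hlt.le

/-- duality: for a continuous concave `ψ : Δ̄_n → [0,∞)` strictly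
positive on `Δ_n` and `Ŝ(ψ) = {x ∈ (0,∞)^n : ⟨q,x⟩ ≥ ψ(q) for all q ∈ Δ_n}`, one has
`ψ(p) = inf_{x ∈ Ŝ(ψ)} ⟨p,x⟩` for every `p ∈ Δ̄_n`. -/
theorem concave_duality_support_function (n : ℕ) (hn : 2 ≤ n)
    (ψ : (Fin n → ℝ) → ℝ)
    (hcont : ContinuousOn ψ (closedSimplex n))
    (hconc : ConcaveOn ℝ (closedSimplex n) ψ)
    (hnonneg : ∀ p ∈ closedSimplex n, 0 ≤ ψ p)
    (hpos : ∀ p ∈ openSimplex n, 0 < ψ p)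
    (p : Fin n → ℝ) (hp : p ∈ closedSimplex n) :
    ψ p = sInf ((fun x => ∑ i, p i * x i) ''
      {x : Fin n → ℝ | (∀ i, 0 < x i) ∧ ∀ q ∈ openSimplex n, ψ q ≤ ∑ i, q i * x i}) :=
  concave_duality_support_function_general n hn ψ hcont hconc hnonneg p hp
end

section
/- Let n ≥ 2, γ > 0 and α_1, …, α_n > −1, set α = ∑_{i=1}^n α_i and h(x) = γ ∏_{i=1}^n x_i^{α_i} for x ∈ (0,∞)^n. Let Ψ be a random element of C (a measurable map from a probability space into the continuous functions on Δ̄_n, taking values in the nonnegative continuous concave functions) such that for every p ∈ Δ_n and every x > 0, ℙ(Ψ(p) ≥ x) = exp(−x^{n+α} ∫_{R(p,1)} h(y) dy). Then with probability 1, Ψ vanishes identically on the boundary ∂Δ_n = Δ̄_n ∖ Δ_n. -/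
open MeasureTheory

/-- The region `R(p,a) = {x ∈ (0,∞)^n : ⟨p,x⟩ < a}`. -/
def Rset (n : ℕ) (p : Fin n → ℝ) (a : ℝ) : Set (Fin n → ℝ) :=
  {x | (∀ i, 0 < x i) ∧ ∑ i, p i * x i < a}

/-!
If `Ψ ω` is positive at a boundary point `q`, say with `q_j = 0`, then concavity and nonnegativity
give `Ψ ω w_s ≥ Ψ ω q / (2(n-1))` at the fixed interior points `w_s = nearFace n j s`,
`0 < s ≤ 1/2`, since `w_s` is a convex combination of `q` with weight `1/(2(n-1))` and another
point of the simplex. On the other hand `R(w_s, 1)` contains a box whose `j`-th side is `1/(2s)`,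
so the integral in the tail formula tends to `∞` as `s → 0⁺` and `ℙ(Ψ w_s ≥ c) → 0` for every
`c > 0`. Taking `c = 1/(m+1)`, the bad event lies in a countable union of null events.
-/

open Set Filter Topology

theorem integrableOn_pi_Ioo_prod_rpow {ι : Type*} [Fintype ι] {α b : ι → ℝ}
    (hα : ∀ i, -1 < α i) (hb : ∀ i, 0 < b i) :
    IntegrableOn (fun y : ι → ℝ => ∏ i, y i ^ α i) (univ.pi fun i => Ioo 0 (b i)) := by
  rw [IntegrableOn, volume_pi, Measure.restrict_pi_pi]
  exact Integrable.fintype_prod fun i =>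
    (intervalIntegral.integrableOn_Ioo_rpow_iff (hb i)).2 (hα i)

theorem setIntegral_pi_Ioo_prod_rpow {ι : Type*} [Fintype ι] {α b : ι → ℝ}
    (hα : ∀ i, -1 < α i) (hb : ∀ i, 0 < b i) :
    ∫ y in univ.pi (fun i => Ioo 0 (b i)), ∏ i, y i ^ α i = ∏ i, b i ^ (α i + 1) / (α i + 1) := by
  rw [volume_pi, Measure.restrict_pi_pi, integral_fintype_prod_eq_prod fun i (t : ℝ) => t ^ α i]
  refine Finset.prod_congr rfl fun i _ => ?_
  rw [← integral_Ioc_eq_integral_Ioo, ← intervalIntegral.integral_of_le (hb i).le,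
    integral_rpow (Or.inl (hα i)), Real.zero_rpow (by linarith [hα i]), sub_zero]

theorem measurableSet_Rset (n : ℕ) (p : Fin n → ℝ) (a : ℝ) : MeasurableSet (Rset n p a) := by
  simp only [Rset, ofPred_and, ofPred_forall]
  exact (MeasurableSet.iInter fun i =>
    measurableSet_lt measurable_const (measurable_pi_apply i)).inter
    (measurableSet_lt (by fun_prop) measurable_const)

theorem Rset_subset_pi_Ioo {n : ℕ} {p : Fin n → ℝ} {a : ℝ} (hp : ∀ i, 0 < p i) :
    Rset n p a ⊆ univ.pi fun i => Ioo 0 (a / p i) := by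
  intro x hx i _
  have hle : p i * x i ≤ ∑ k, p k * x k :=
    Finset.single_le_sum (fun k _ => (mul_pos (hp k) (hx.1 k)).le) (Finset.mem_univ i)
  exact ⟨hx.1 i, (lt_div_iff₀' (hp i)).2 (hle.trans_lt hx.2)⟩

theorem pi_Ioo_subset_Rset {n : ℕ} {p b : Fin n → ℝ} {a : ℝ} (hp : ∀ i, 0 ≤ p i)
    (hpb : ∑ i, p i * b i < a) : (univ.pi fun i => Ioo 0 (b i)) ⊆ Rset n p a := by
  intro x hx
  refine ⟨fun i => (hx i (mem_univ i)).1, lt_of_le_of_lt ?_ hpb⟩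
  exact Finset.sum_le_sum fun i _ => mul_le_mul_of_nonneg_left (hx i (mem_univ i)).2.le (hp i)

theorem prod_rpow_div_le_setIntegral_Rset {n : ℕ} {α p b : Fin n → ℝ} {a : ℝ}
    (hα : ∀ i, -1 < α i) (hp : ∀ i, 0 < p i) (hb : ∀ i, 0 < b i) (hpb : ∑ i, p i * b i < a) :
    ∏ i, b i ^ (α i + 1) / (α i + 1) ≤ ∫ y in Rset n p a, ∏ i, y i ^ α i := by
  have ha : 0 < a := (Finset.sum_nonneg fun i _ => (mul_pos (hp i) (hb i)).le).trans_lt hpb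
  rw [← setIntegral_pi_Ioo_prod_rpow hα hb]
  refine setIntegral_mono_set
    ((integrableOn_pi_Ioo_prod_rpow hα fun i => div_pos ha (hp i)).mono_set (Rset_subset_pi_Ioo hp))
    ?_ (pi_Ioo_subset_Rset (fun i => (hp i).le) hpb).eventuallyLE
  exact (ae_restrict_iff' (measurableSet_Rset n p a)).2 <| Eventually.of_forall fun y hy =>
    Finset.prod_nonneg fun i _ => Real.rpow_nonneg (hy.1 i).le _

theorem rpow_mul_prod_le_setIntegral_Rset {n : ℕ} {α q : Fin n → ℝ} (hα : ∀ i, -1 < α i)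
    (hq : q ∈ openSimplex n) (j : Fin n) :
    ((q j)⁻¹ / 2) ^ (α j + 1) / (α j + 1) *
        ∏ i ∈ Finset.univ.erase j, (1 / 2 : ℝ) ^ (α i + 1) / (α i + 1)
      ≤ ∫ y in Rset n q 1, ∏ i, y i ^ α i := by
  obtain ⟨b, hbj, hbi⟩ : ∃ b : Fin n → ℝ, b j = (q j)⁻¹ / 2 ∧ ∀ i ≠ j, b i = 1 / 2 :=
    ⟨Function.update _ j _, Function.update_self .., fun i hi => Function.update_of_ne hi ..⟩
  have hqj : 0 < q j := (hq.1 j).1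
  have hb : ∀ i, 0 < b i := by
    intro i
    rcases eq_or_ne i j with rfl | hij
    · rw [hbj]; positivity
    · rw [hbi i hij]; norm_num
  have hqb : ∑ i, q i * b i < 1 := by
    have hrest : ∑ i ∈ Finset.univ.erase j, q i = 1 - q j := by
      rw [← hq.2, ← Finset.add_sum_erase _ _ (Finset.mem_univ j), add_sub_cancel_left]
    rw [← Finset.add_sum_erase _ _ (Finset.mem_univ j),
      Finset.sum_congr rfl fun i hi => by rw [hbi i (Finset.ne_of_mem_erase hi)],
      ← Finset.sum_mul, hrest, hbj, mul_div_assoc', mul_inv_cancel₀ hqj.ne']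
    linarith
  have := prod_rpow_div_le_setIntegral_Rset hα (fun i => (hq.1 i).1) hb hqb
  rwa [← Finset.mul_prod_erase _ _ (Finset.mem_univ j), hbj,
    Finset.prod_congr rfl fun i hi => by rw [hbi i (Finset.ne_of_mem_erase hi)]] at this

theorem tendsto_setIntegral_Rset_atTop {n : ℕ} {α : Fin n → ℝ} (hα : ∀ i, -1 < α i)
    {ι : Type*} {l : Filter ι} {p : ι → Fin n → ℝ} (j : Fin n)
    (hp : ∀ᶠ i in l, p i ∈ openSimplex n) (hpj : Tendsto (fun i => p i j) l (𝓝[>] 0)) :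
    Tendsto (fun i => ∫ y in Rset n (p i) 1, ∏ k, y k ^ α k) l atTop := by
  have ha : ∀ i, 0 < α i + 1 := fun i => by linarith [hα i]
  have hK : 0 < ∏ i ∈ Finset.univ.erase j, (1 / 2 : ℝ) ^ (α i + 1) / (α i + 1) :=
    Finset.prod_pos fun i _ => div_pos (by positivity) (ha i)
  refine tendsto_atTop_mono' l (hp.mono fun i hi => rpow_mul_prod_le_setIntegral_Rset hα hi j) ?_
  exact (((tendsto_rpow_atTop (ha j)).comp ((tendsto_inv_nhdsGT_zero.comp hpj).atTop_div_const
    two_pos)).atTop_div_const (ha j)).atTop_mul_const hK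

theorem ConcaveOn.mul_le_apply_of_smul_le {ι : Type*} [Fintype ι] {f : (ι → ℝ) → ℝ}
    (hf : ConcaveOn ℝ (stdSimplex ℝ ι) f) (hf0 : ∀ x ∈ stdSimplex ℝ ι, 0 ≤ f x)
    {q w : ι → ℝ} (hq : q ∈ stdSimplex ℝ ι) (hw : w ∈ stdSimplex ℝ ι)
    {c : ℝ} (hc0 : 0 ≤ c) (hc1 : c < 1) (hcqw : c • q ≤ w) : c * f q ≤ f w := by
  have hc1' : 0 < 1 - c := sub_pos.2 hc1
  set r := (1 - c)⁻¹ • (w - c • q)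
  have hr : r ∈ stdSimplex ℝ ι := by
    refine ⟨fun i => smul_nonneg (inv_nonneg.2 hc1'.le) (sub_nonneg.2 (hcqw i)), ?_⟩
    simp only [r, Pi.smul_apply, Pi.sub_apply, smul_eq_mul, ← Finset.mul_sum,
      Finset.sum_sub_distrib, hw.2, hq.2, mul_one]
    exact inv_mul_cancel₀ hc1'.ne'
  have hw_eq : c • q + (1 - c) • r = w := by
    simp only [r, smul_smul, mul_inv_cancel₀ hc1'.ne', one_smul, add_sub_cancel]
  have hconc := hf.2 hq hr hc0 hc1'.le (add_sub_cancel c 1)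
  rw [hw_eq, smul_eq_mul, smul_eq_mul] at hconc
  nlinarith [hf0 r hr]

theorem one_le_natCast_sub_one {n : ℕ} (hn : 2 ≤ n) : (1 : ℝ) ≤ n - 1 := by
  have : (2 : ℝ) ≤ n := by exact_mod_cast hn
  linarith

noncomputable def nearFace (n : ℕ) (j : Fin n) (s : ℝ) : Fin n → ℝ :=
  Function.update (fun _ => (1 - s) / (n - 1)) j s

theorem nearFace_self (n : ℕ) (j : Fin n) (s : ℝ) : nearFace n j s j = s :=
  Function.update_self ..

theorem nearFace_of_ne {n : ℕ} {i j : Fin n} (h : i ≠ j) (s : ℝ) :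
    nearFace n j s i = (1 - s) / (n - 1) :=
  Function.update_of_ne h ..

theorem sum_nearFace {n : ℕ} (hn : 2 ≤ n) (j : Fin n) (s : ℝ) : ∑ i, nearFace n j s i = 1 := by
  have hn1 : (1 : ℝ) < n := by exact_mod_cast hn
  rw [nearFace, Finset.sum_update_of_mem (Finset.mem_univ j), Finset.sum_const,
    Finset.card_sdiff, Finset.card_univ, Fintype.card_fin]
  simp [Nat.cast_sub (by omega : 1 ≤ n), mul_div_cancel₀ _ (sub_ne_zero.2 hn1.ne')]

theorem nearFace_mem_openSimplex {n : ℕ} (hn : 2 ≤ n) (j : Fin n) {s : ℝ} (hs0 : 0 < s)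
    (hs1 : s < 1) : nearFace n j s ∈ openSimplex n := by
  have hn1 := one_le_natCast_sub_one hn
  refine ⟨fun i => ?_, sum_nearFace hn j s⟩
  rcases eq_or_ne i j with rfl | hij
  · rw [nearFace_self]; exact ⟨hs0, hs1⟩
  · rw [nearFace_of_ne hij]
    exact ⟨div_pos (by linarith) (by linarith), (div_lt_one (by linarith)).2 (by linarith)⟩

theorem smul_le_nearFace {n : ℕ} (hn : 2 ≤ n) {q : Fin n → ℝ} (hq : q ∈ closedSimplex n)
    {j : Fin n} (hqj : q j = 0) {s : ℝ} (hs0 : 0 ≤ s) (hs : s ≤ 1 / 2) :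
    (2 * ((n : ℝ) - 1))⁻¹ • q ≤ nearFace n j s := by
  have hn1 := one_le_natCast_sub_one hn
  intro i
  rw [Pi.smul_apply, smul_eq_mul]
  rcases eq_or_ne i j with rfl | hij
  · rw [hqj, mul_zero, nearFace_self]; exact hs0
  · have hqi : q i ≤ 1 := hq.2 ▸ Finset.single_le_sum (fun k _ => hq.1 k) (Finset.mem_univ i)
    rw [nearFace_of_ne hij, ← one_div, div_mul_eq_mul_div, one_mul,
      div_le_div_iff₀ (by linarith) (by linarith)]
    nlinarith [hq.1 i]

theorem inv_mul_le_apply_nearFace {n : ℕ} (hn : 2 ≤ n) {f : (Fin n → ℝ) → ℝ}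
    (hf : ConcaveOn ℝ (closedSimplex n) f) (hf0 : ∀ p ∈ closedSimplex n, 0 ≤ f p)
    {q : Fin n → ℝ} (hq : q ∈ closedSimplex n) {j : Fin n} (hqj : q j = 0)
    {s : ℝ} (hs0 : 0 < s) (hs : s ≤ 1 / 2) :
    (2 * ((n : ℝ) - 1))⁻¹ * f q ≤ f (nearFace n j s) := by
  have hn1 := one_le_natCast_sub_one hn
  refine hf.mul_le_apply_of_smul_le hf0 hq ?_ (by positivity) ?_
    (smul_le_nearFace hn hq hqj hs0.le hs)
  · have hw := nearFace_mem_openSimplex hn j hs0 (by linarith)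
    exact ⟨fun i => (hw.1 i).1.le, hw.2⟩
  · exact inv_lt_one_of_one_lt₀ (by linarith)

theorem tendsto_measure_le_apply_nearFace {n : ℕ} (hn : 2 ≤ n) {γ : ℝ} (hγ : 0 < γ)
    {αv : Fin n → ℝ} (hαv : ∀ i, -1 < αv i) {Ω : Type*} [MeasurableSpace Ω] {P : Measure Ω}
    {Ψ : Ω → (Fin n → ℝ) → ℝ}
    (htail : ∀ p ∈ openSimplex n, ∀ x : ℝ, 0 < x →
      P {ω | x ≤ Ψ ω p} = ENNReal.ofReal (Real.exp
        (-(x ^ ((n : ℝ) + ∑ i, αv i) *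
          ∫ y in Rset n p 1, γ * ∏ i, y i ^ αv i))))
    (j : Fin n) {c : ℝ} (hc : 0 < c) :
    Tendsto (fun s => P {ω | c ≤ Ψ ω (nearFace n j s)}) (𝓝[>] 0) (𝓝 0) := by
  have hmem : ∀ᶠ s in 𝓝[>] (0 : ℝ), nearFace n j s ∈ openSimplex n := by
    filter_upwards [Ioo_mem_nhdsGT one_pos] with s hs using nearFace_mem_openSimplex hn j hs.1 hs.2
  have hI : Tendsto (fun s => ∫ y in Rset n (nearFace n j s) 1, γ * ∏ i, y i ^ αv i)
      (𝓝[>] 0) atTop := by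
    simp only [integral_const_mul]
    refine (tendsto_setIntegral_Rset_atTop hαv j hmem ?_).const_mul_atTop hγ
    simp only [nearFace_self]
    exact tendsto_id
  refine Tendsto.congr' (hmem.mono fun s hs => (htail _ hs c hc).symm) ?_
  simpa using ENNReal.tendsto_ofReal (Real.tendsto_exp_atBot.comp
    (tendsto_neg_atTop_atBot.comp (hI.const_mul_atTop (Real.rpow_pos_of_pos hc _))))

theorem exists_eq_zero_of_mem_closedSimplex_diff {n : ℕ} (hn : 2 ≤ n) {q : Fin n → ℝ}
    (hq : q ∈ closedSimplex n \ openSimplex n) : ∃ j, q j = 0 := by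
  by_contra! hne
  have hpos : ∀ i, 0 < q i := fun i => (hq.1.1 i).lt_of_ne' (hne i)
  refine hq.2 ⟨fun i => ⟨hpos i, ?_⟩, hq.1.2⟩
  have : Nontrivial (Fin n) := Fin.nontrivial_iff_two_le.2 hn
  obtain ⟨k, hki⟩ := exists_ne i
  calc q i < q i + q k := lt_add_of_pos_right _ (hpos k)
    _ = ∑ l ∈ {i, k}, q l := (Finset.sum_pair hki.symm).symm
    _ ≤ ∑ l, q l := Finset.sum_le_sum_of_subset_of_nonneg (Finset.subset_univ _)
        fun l _ _ => hq.1.1 l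
    _ = 1 := hq.1.2

theorem random_concave_vanishes_on_boundary_general (n : ℕ) (hn : 2 ≤ n)
    (γ : ℝ) (hγ : 0 < γ) (αv : Fin n → ℝ) (hαv : ∀ i, -1 < αv i)
    {Ω : Type*} [MeasurableSpace Ω] (P : Measure Ω)
    (Ψ : Ω → (Fin n → ℝ) → ℝ)
    (hΨconc : ∀ ω, ConcaveOn ℝ (closedSimplex n) (Ψ ω))
    (hΨnonneg : ∀ ω, ∀ p ∈ closedSimplex n, 0 ≤ Ψ ω p)
    (htail : ∀ p ∈ openSimplex n, ∀ x : ℝ, 0 < x →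
      P {ω | x ≤ Ψ ω p} = ENNReal.ofReal (Real.exp
        (-(x ^ ((n : ℝ) + ∑ i, αv i) *
          ∫ y in Rset n p 1, γ * ∏ i, y i ^ αv i)))) :
    ∀ᵐ ω ∂P, ∀ p ∈ closedSimplex n \ openSimplex n, Ψ ω p = 0 := by
  have hn1 : (0 : ℝ) < 2 * ((n : ℝ) - 1) := by linarith [one_le_natCast_sub_one hn]
  rw [ae_iff]
  refine measure_mono_null (t := ⋃ (j : Fin n) (m : ℕ),
      {ω | ∀ s ∈ Ioc (0 : ℝ) (1 / 2), 1 / ((m : ℝ) + 1) ≤ Ψ ω (nearFace n j s)}) ?_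
    (measure_iUnion_null fun j => measure_iUnion_null fun m => ?_)
  · intro ω hω
    obtain ⟨q, hq, hΨq⟩ : ∃ q ∈ closedSimplex n \ openSimplex n, Ψ ω q ≠ 0 := by
      simpa only [mem_ofPred_eq, not_forall, exists_prop] using hω
    obtain ⟨j, hqj⟩ := exists_eq_zero_of_mem_closedSimplex_diff hn hq
    obtain ⟨m, hm⟩ := exists_nat_one_div_lt
      (mul_pos (inv_pos.2 hn1) ((hΨnonneg ω q hq.1).lt_of_ne' hΨq))
    simp only [mem_iUnion]
    exact ⟨j, m, fun s hs =>
      hm.le.trans (inv_mul_le_apply_nearFace hn (hΨconc ω) (hΨnonneg ω) hq.1 hqj hs.1 hs.2)⟩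
  · refine nonpos_iff_eq_zero.1 (ge_of_tendsto
      (tendsto_measure_le_apply_nearFace hn hγ hαv htail j (Nat.one_div_pos_of_nat (n := m))) ?_)
    filter_upwards [Ioc_mem_nhdsGT (by norm_num : (0 : ℝ) < 1 / 2)] with s hs
    exact measure_mono fun ω hω => hω s hs

/-- let `h(x) = γ ∏ x_i^{α_i}` with `γ > 0`, `α_i > −1`, `α = ∑ α_i`,
and let `Ψ` be a random nonnegative continuous concave function on `Δ̄_n` such that
`ℙ(Ψ(p) ≥ x) = exp(−x^{n+α} ∫_{R(p,1)} h)` for all `p ∈ Δ_n`, `x > 0`. Then almost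
surely `Ψ` vanishes identically on `∂Δ_n = Δ̄_n ∖ Δ_n`. -/
theorem random_concave_vanishes_on_boundary (n : ℕ) (hn : 2 ≤ n)
    (γ : ℝ) (hγ : 0 < γ) (αv : Fin n → ℝ) (hαv : ∀ i, -1 < αv i)
    {Ω : Type*} [MeasurableSpace Ω] (P : Measure Ω) [IsProbabilityMeasure P]
    (Ψ : Ω → (Fin n → ℝ) → ℝ)
    (hΨcont : ∀ ω, ContinuousOn (Ψ ω) (closedSimplex n))
    (hΨconc : ∀ ω, ConcaveOn ℝ (closedSimplex n) (Ψ ω))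
    (hΨnonneg : ∀ ω, ∀ p ∈ closedSimplex n, 0 ≤ Ψ ω p)
    (hΨmeas : ∀ p : Fin n → ℝ, Measurable (fun ω => Ψ ω p))
    (htail : ∀ p ∈ openSimplex n, ∀ x : ℝ, 0 < x →
      P {ω | x ≤ Ψ ω p} = ENNReal.ofReal (Real.exp
        (-(x ^ ((n : ℝ) + ∑ i, αv i) *
          ∫ y in Rset n p 1, γ * ∏ i, y i ^ αv i)))) :
    ∀ᵐ ω ∂P, ∀ p ∈ closedSimplex n \ openSimplex n, Ψ ω p = 0 :=
  random_concave_vanishes_on_boundary_general n hn γ hγ αv hαv P Ψ hΨconc hΨnonneg htail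
end
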